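/- For every letter i ∈ A and all columns a, b over A, the indicator identity (if i ∈ {a} then 1 else 0) + (if i ∈ {b} then 1 else 0) = (if i ∈ {a ∨ b} then 1 else 0) + (if i ∈ {a ∧ b} then 1 else 0) holds in ℕ. (Equivalently, the functions ξ_i(x) = [i ∈ {x}] on columns are 1-cocycles of the Anick cochain complex of the plactic monoid algebra.) -/
import Mathlib


/-- One step of Schensted's column matching: try to match the letter `x`
to the smallest still-unmatched letter `y` of the state with `x ≤ y`.
The state is `(remaining unmatched letters of b, matched letters of b)`. -/
def matchStep {n : ℕ} (x : Fin n) (st : Finset (Fin n) × Finset (Fin n)) :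
    Finset (Fin n) × Finset (Fin n) :=
  let cand := st.1.filter (fun y => x ≤ y)
  if h : cand.Nonempty then (st.1.erase (cand.min' h), insert (cand.min' h) st.2)
  else st

/-- `colMatch a b` is the set `b_a` of connected (matched) letters of the column `b`,
obtained by scanning the letters of the column `a` in increasing order and matching
each letter `x` of `a` to the smallest not-yet-matched letter `y` of `b` with `y ≥ x`. -/
def colMatch {n : ℕ} (a b : Finset (Fin n)) : Finset (Fin n) :=
  ((a.sort (· ≤ ·)).foldl (fun st x => matchStep x st) (b, (∅ : Finset (Fin n)))).2

/-- The column `a ∨ b`, with letter set `{a} ∪ b^a`. -/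
def vee {n : ℕ} (a b : Finset (Fin n)) : Finset (Fin n) := a ∪ (b \ colMatch a b)

/-- The column `a ∧ b`, with letter set `b_a`. -/
def wedge {n : ℕ} (a b : Finset (Fin n)) : Finset (Fin n) := colMatch a b

lemma matchStep_union {n : ℕ} (x : Fin n) (st : Finset (Fin n) × Finset (Fin n)) :
    (matchStep x st).1 ∪ (matchStep x st).2 = st.1 ∪ st.2 := by
  unfold matchStep
  set cand := st.1.filter (fun y => x ≤ y) with hc
  by_cases h : cand.Nonempty
  · simp only [dif_pos h]
    have hm : cand.min' h ∈ st.1 := (Finset.mem_filter.mp (cand.min'_mem h)).1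
    ext y
    simp only [Finset.mem_union, Finset.mem_erase, Finset.mem_insert]
    constructor
    · rintro ((⟨_, hy⟩) | (rfl | hy))
      · exact Or.inl hy
      · exact Or.inl hm
      · exact Or.inr hy
    · rintro (hy | hy)
      · by_cases hxm : y = cand.min' h
        · exact Or.inr (Or.inl hxm)
        · exact Or.inl ⟨hxm, hy⟩
      · exact Or.inr (Or.inr hy)
  · simp [dif_neg h]

lemma foldl_union {n : ℕ} (l : List (Fin n)) (st : Finset (Fin n) × Finset (Fin n)) :
    (l.foldl (fun st x => matchStep x st) st).1 ∪ (l.foldl (fun st x => matchStep x st) st).2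
      = st.1 ∪ st.2 := by
  induction l generalizing st with
  | nil => rfl
  | cons x t ih => rw [List.foldl_cons, ih, matchStep_union]

lemma matchStep_snd_subset {n : ℕ} (x : Fin n) (st : Finset (Fin n) × Finset (Fin n)) :
    st.2 ⊆ (matchStep x st).2 := by
  unfold matchStep
  by_cases h : (st.1.filter (fun y => x ≤ y)).Nonempty
  · simp only [dif_pos h]; exact Finset.subset_insert _ _
  · simp [dif_neg h]

lemma foldl_snd_subset {n : ℕ} (l : List (Fin n)) (st : Finset (Fin n) × Finset (Fin n)) :
    st.2 ⊆ (l.foldl (fun st x => matchStep x st) st).2 := by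
  induction l generalizing st with
  | nil => exact subset_rfl
  | cons x t ih => exact (matchStep_snd_subset x st).trans (ih _)

lemma mem_foldl_snd {n : ℕ} (i : Fin n) (l : List (Fin n))
    (st : Finset (Fin n) × Finset (Fin n)) (hl : i ∈ l) (hst : i ∈ st.1 ∪ st.2) :
    i ∈ (l.foldl (fun st x => matchStep x st) st).2 := by
  induction l generalizing st with
  | nil => cases hl
  | cons x t ih =>
    rw [List.foldl_cons]
    rcases Finset.mem_union.mp hst with h1 | h2
    · by_cases hx : x = i
      · subst hx
        apply foldl_snd_subset
        unfold matchStep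
        have hcand : x ∈ st.1.filter (fun y => x ≤ y) :=
          Finset.mem_filter.mpr ⟨h1, le_refl x⟩
        have hne : (st.1.filter (fun y => x ≤ y)).Nonempty := ⟨x, hcand⟩
        simp only [dif_pos hne]
        have hmin : (st.1.filter (fun y => x ≤ y)).min' hne = x := by
          apply le_antisymm
          · exact Finset.min'_le _ _ hcand
          · exact (Finset.mem_filter.mp ((st.1.filter (fun y => x ≤ y)).min'_mem hne)).2
        rw [hmin]
        exact Finset.mem_insert_self _ _
      · have ht : i ∈ t := by
          rcases List.mem_cons.mp hl with h | h
          · exact absurd h.symm hx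
          · exact h
        apply ih _ ht
        rw [matchStep_union]
        exact hst
    · by_cases ht : i ∈ t
      · apply ih _ ht; rw [matchStep_union]; exact hst
      · exact foldl_snd_subset _ _ (matchStep_snd_subset x st h2)

lemma colMatch_subset {n : ℕ} (a b : Finset (Fin n)) : colMatch a b ⊆ b := by
  intro y hy
  have := foldl_union (a.sort (· ≤ ·)) (b, (∅ : Finset (Fin n)))
  have hy' : y ∈ b ∪ (∅ : Finset (Fin n)) := by
    rw [← this]; exact Finset.mem_union_right _ hy
  simpa using hy'

lemma mem_colMatch_of_mem {n : ℕ} {i : Fin n} {a b : Finset (Fin n)}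
    (ha : i ∈ a) (hb : i ∈ b) : i ∈ colMatch a b := by
  apply mem_foldl_snd
  · rwa [Finset.mem_sort]
  · exact Finset.mem_union_left _ hb

/-- For every letter `i ∈ A` and all columns `a, b` over `A`, the indicator identity
`[i ∈ a] + [i ∈ b] = [i ∈ a ∨ b] + [i ∈ a ∧ b]` holds in `ℕ`
(so the functions `ξ_i(x) = [i ∈ x]` are 1-cocycles of the Anick cochain complex
of the plactic monoid algebra). -/
theorem indicator_cocycle (n : ℕ) (hn : 1 ≤ n) (i : Fin n) (a b : Finset (Fin n)) :
    ((if i ∈ a then 1 else 0) + (if i ∈ b then 1 else 0) : ℕ) =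
      (if i ∈ vee a b then 1 else 0) + (if i ∈ wedge a b then 1 else 0) := by
  unfold vee wedge
  by_cases ha : i ∈ a <;> by_cases hb : i ∈ b
  · have hc := mem_colMatch_of_mem ha hb
    simp [ha, hb, hc]
  · have hc : i ∉ colMatch a b := fun h => hb (colMatch_subset a b h)
    simp [ha, hb, hc]
  · by_cases hc : i ∈ colMatch a b <;> simp [ha, hb, hc]
  · have hc : i ∉ colMatch a b := fun h => hb (colMatch_subset a b h)
    simp [ha, hb, hc]
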